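/- The set E = { r ∈ ℝ⁶ : all six coordinates r_ij ≥ 0, r12² + r13² + r14² + r23² + r24² + r34² = 8, and F(r) = 0 }, with the subspace topology from ℝ⁶, is contractible. -/
import Mathlib

noncomputable section

/-- `F` as a function of the vector of mutual distances
`r = (r12, r13, r14, r23, r24, r34)` (indexed `0,…,5`). -/
def F (r : Fin 6 → ℝ) : ℝ :=
  2 * r 0 * r 5 - (r 1) ^ 2 - (r 4) ^ 2 + (r 3) ^ 2 + (r 2) ^ 2

/-- The nonnegative part `E = M₀⁺` of the constraint set `{Σ r_ij² = 8, F = 0}`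
for four unit masses. -/
def E : Set (Fin 6 → ℝ) :=
  {r | (∀ i, 0 ≤ r i) ∧
    (r 0) ^ 2 + (r 1) ^ 2 + (r 2) ^ 2 + (r 3) ^ 2 + (r 4) ^ 2 + (r 5) ^ 2 = 8 ∧
    F r = 0}

/-- The deformation map. -/
def gmap (t : ℝ) (r : Fin 6 → ℝ) : Fin 6 → ℝ := fun i =>
  if i = 1 ∨ i = 2 then Real.sqrt ((1 - t) * (r i) ^ 2 + 4 * t)
  else Real.sqrt (1 - t) * r i

lemma gmap0 (t : ℝ) (r : Fin 6 → ℝ) : gmap t r 0 = Real.sqrt (1 - t) * r 0 := by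
  simp [gmap]
lemma gmap1 (t : ℝ) (r : Fin 6 → ℝ) :
    gmap t r 1 = Real.sqrt ((1 - t) * (r 1) ^ 2 + 4 * t) := by simp [gmap]
lemma gmap2 (t : ℝ) (r : Fin 6 → ℝ) :
    gmap t r 2 = Real.sqrt ((1 - t) * (r 2) ^ 2 + 4 * t) := by simp [gmap]
lemma gmap3 (t : ℝ) (r : Fin 6 → ℝ) : gmap t r 3 = Real.sqrt (1 - t) * r 3 := by
  simp [gmap]
lemma gmap4 (t : ℝ) (r : Fin 6 → ℝ) : gmap t r 4 = Real.sqrt (1 - t) * r 4 := by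
  simp [gmap]
lemma gmap5 (t : ℝ) (r : Fin 6 → ℝ) : gmap t r 5 = Real.sqrt (1 - t) * r 5 := by
  simp [gmap]

lemma gmap_mem (t : ℝ) (ht0 : 0 ≤ t) (ht1 : t ≤ 1) {r : Fin 6 → ℝ} (hr : r ∈ E) :
    gmap t r ∈ E := by
  obtain ⟨hnn, hsum, hF⟩ := hr
  have h1t : (0:ℝ) ≤ 1 - t := by linarith
  have harg : ∀ i : Fin 6, 0 ≤ (1 - t) * (r i) ^ 2 + 4 * t := by
    intro i; positivity
  have hs : Real.sqrt (1 - t) ^ 2 = 1 - t := Real.sq_sqrt h1t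
  have hsq1 : Real.sqrt ((1 - t) * (r 1) ^ 2 + 4 * t) ^ 2 = (1 - t) * (r 1) ^ 2 + 4 * t :=
    Real.sq_sqrt (harg 1)
  have hsq2 : Real.sqrt ((1 - t) * (r 2) ^ 2 + 4 * t) ^ 2 = (1 - t) * (r 2) ^ 2 + 4 * t :=
    Real.sq_sqrt (harg 2)
  refine ⟨?_, ?_, ?_⟩
  · intro i
    by_cases h : i = 1 ∨ i = 2
    · simp only [gmap, if_pos h]; exact Real.sqrt_nonneg _
    · simp only [gmap, if_neg h]; exact mul_nonneg (Real.sqrt_nonneg _) (hnn _)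
  · show (gmap t r 0)^2 + (gmap t r 1)^2 + (gmap t r 2)^2 + (gmap t r 3)^2
      + (gmap t r 4)^2 + (gmap t r 5)^2 = 8
    rw [gmap0, gmap1, gmap2, gmap3, gmap4, gmap5]
    rw [mul_pow, mul_pow, mul_pow, mul_pow, hs, hsq1, hsq2]
    nlinarith [hsum]
  · show F (gmap t r) = 0
    have hF' : 2 * r 0 * r 5 - (r 1)^2 - (r 4)^2 + (r 3)^2 + (r 2)^2 = 0 := hF
    simp only [F, gmap0, gmap1, gmap2, gmap3, gmap4, gmap5]
    rw [mul_pow, mul_pow, hsq1, hsq2]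
    nlinarith [hs, hF']

/-- The target point `(0,2,2,0,0,0)`. -/
def pvec : Fin 6 → ℝ := fun i => if i = 1 ∨ i = 2 then 2 else 0

lemma pvec1 : pvec 1 = 2 := by simp [pvec]
lemma pvec2 : pvec 2 = 2 := by simp [pvec]
lemma pvec0 : pvec 0 = 0 := by simp [pvec]
lemma pvec3 : pvec 3 = 0 := by simp [pvec]
lemma pvec4 : pvec 4 = 0 := by simp [pvec]
lemma pvec5 : pvec 5 = 0 := by simp [pvec]

lemma p_mem : pvec ∈ E := by
  refine ⟨?_, ?_, ?_⟩
  · intro i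
    by_cases h : i = 1 ∨ i = 2 <;> simp [pvec, h]
  · rw [pvec0, pvec1, pvec2, pvec3, pvec4, pvec5]; norm_num
  · show 2 * pvec 0 * pvec 5 - (pvec 1)^2 - (pvec 4)^2 + (pvec 3)^2 + (pvec 2)^2 = 0
    rw [pvec0, pvec1, pvec2, pvec3, pvec4, pvec5]; norm_num

lemma sqrt_four : Real.sqrt 4 = 2 := by
  rw [show (4:ℝ) = 2^2 by norm_num, Real.sqrt_sq (by norm_num : (0:ℝ) ≤ 2)]

/-- The set `E`, with the subspace topology from ℝ⁶, is contractible. -/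
theorem E_contractible : ContractibleSpace E := by
  rw [contractible_iff_id_nullhomotopic]
  refine ⟨⟨pvec, p_mem⟩, ⟨?_⟩⟩
  refine ⟨⟨fun q => ⟨gmap q.1 (q.2 : Fin 6 → ℝ),
      gmap_mem _ q.1.2.1 q.1.2.2 q.2.2⟩, ?_⟩, ?_, ?_⟩
  · apply Continuous.subtype_mk
    apply continuous_pi
    intro i
    have hc1 : Continuous fun (q : unitInterval × E) => (q.1 : ℝ) :=
      continuous_subtype_val.comp continuous_fst
    have hc2 : Continuous fun (q : unitInterval × E) => (q.2 : Fin 6 → ℝ) i :=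
      (continuous_apply i).comp (continuous_subtype_val.comp continuous_snd)
    by_cases h : i = 1 ∨ i = 2
    · simp only [gmap, if_pos h]
      exact Real.continuous_sqrt.comp
        (((continuous_const.sub hc1).mul (hc2.pow 2)).add (continuous_const.mul hc1))
    · simp only [gmap, if_neg h]
      exact (Real.continuous_sqrt.comp (continuous_const.sub hc1)).mul hc2
  · intro x
    have hnn := x.2.1
    ext i
    show gmap 0 (x : Fin 6 → ℝ) i = (x : Fin 6 → ℝ) i
    by_cases h : i = 1 ∨ i = 2
    · simp only [gmap, if_pos h]
      rw [show (1:ℝ) - 0 = 1 by norm_num]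
      simp [Real.sqrt_sq (hnn i)]
    · simp only [gmap, if_neg h]
      simp
  · intro x
    ext i
    show gmap 1 (x : Fin 6 → ℝ) i = pvec i
    by_cases h : i = 1 ∨ i = 2
    · simp only [gmap, pvec, if_pos h]
      norm_num [sqrt_four]
    · simp only [gmap, pvec, if_neg h]
      simp
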